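/- For every τ in the upper half-plane and every z ∈ ℂ, ϑ₂(τ)²·θ₃(z|τ)² - ϑ₃(τ)²·θ₂(z|τ)² = ϑ₄(τ)²·θ₁(z|τ)². -/

import Mathlib

open Complex

/-- Jacobi's θ₁. -/
noncomputable def jtheta1 (z τ : ℂ) : ℂ :=
  -I * Complex.exp ((Real.pi : ℂ) * I * τ / 4) *
    ∑' k : ℤ, (-1 : ℂ) ^ k * Complex.exp (((k : ℂ) ^ 2 + (k : ℂ)) * (Real.pi : ℂ) * I * τ)
      * Complex.exp ((2 * (k : ℂ) + 1) * (Real.pi : ℂ) * I * z)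

/-- Jacobi's θ₂. -/
noncomputable def jtheta2 (z τ : ℂ) : ℂ :=
  Complex.exp ((Real.pi : ℂ) * I * τ / 4) *
    ∑' k : ℤ, Complex.exp (((k : ℂ) ^ 2 + (k : ℂ)) * (Real.pi : ℂ) * I * τ)
      * Complex.exp ((2 * (k : ℂ) + 1) * (Real.pi : ℂ) * I * z)

/-- Jacobi's θ₃. -/
noncomputable def jtheta3 (z τ : ℂ) : ℂ :=
  ∑' k : ℤ, Complex.exp ((k : ℂ) ^ 2 * (Real.pi : ℂ) * I * τ)
    * Complex.exp (2 * (k : ℂ) * (Real.pi : ℂ) * I * z)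

/-- Jacobi's θ₄. -/
noncomputable def jtheta4 (z τ : ℂ) : ℂ :=
  ∑' k : ℤ, (-1 : ℂ) ^ k * Complex.exp ((k : ℂ) ^ 2 * (Real.pi : ℂ) * I * τ)
    * Complex.exp (2 * (k : ℂ) * (Real.pi : ℂ) * I * z)

/-!
Each of the four theta functions is an elementary exponential factor times
`θ(w, τ) = ∑ₙ exp (2πinw + πin²τ)` (Mathlib's `jacobiTheta₂`) at `w = z`, `z + 1/2`,
`z + τ/2` or `z + τ/2 + 1/2`. Splitting the double sum for `θ(w, τ)²` by the parity of
`m + n` and substituting `(m, n) = (u + v, u - v)`, resp. `(u + v + 1, u - v)`, expresses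
every square through `θ(2z, 2τ)`, `θ(0, 2τ)`, `θ(2z + τ, 2τ)` and `θ(τ, 2τ)`; the identity
is then a polynomial identity in these four values.
-/

open scoped Real

noncomputable def Int.prodParityEquiv : (ℤ × ℤ) ⊕ (ℤ × ℤ) ≃ ℤ × ℤ :=
  Equiv.ofBijective
    (Sum.elim (fun p => (p.1 + p.2, p.1 - p.2)) (fun p => (p.1 + p.2 + 1, p.1 - p.2))) <| by
    refine ⟨?_, ?_⟩
    · rintro (⟨a, b⟩ | ⟨a, b⟩) (⟨c, d⟩ | ⟨c, d⟩) h <;>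
        simp only [Sum.elim_inl, Sum.elim_inr, Prod.mk.injEq, Sum.inl.injEq, Sum.inr.injEq,
          reduceCtorEq] at h ⊢ <;> omega
    · rintro ⟨m, n⟩
      obtain ⟨k, hk | hk⟩ := Int.even_or_odd' (m + n)
      · exact ⟨.inl (k, m - k), by simp only [Sum.elim_inl, Prod.mk.injEq]; omega⟩
      · exact ⟨.inr (k, m - k - 1), by simp only [Sum.elim_inr, Prod.mk.injEq]; omega⟩

lemma jacobiTheta₂_term_add_mul_sub (u v : ℤ) (z τ : ℂ) :
    jacobiTheta₂_term (u + v) z τ * jacobiTheta₂_term (u - v) z τ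
      = jacobiTheta₂_term u (2 * z) (2 * τ) * jacobiTheta₂_term v 0 (2 * τ) := by
  simp only [jacobiTheta₂_term, ← Complex.exp_add]
  push_cast
  ring_nf

lemma jacobiTheta₂_term_add_add_one_mul_sub (u v : ℤ) (z τ : ℂ) :
    jacobiTheta₂_term (u + v + 1) z τ * jacobiTheta₂_term (u - v) z τ
      = cexp (π * I * (2 * z + τ))
        * (jacobiTheta₂_term u (2 * z + τ) (2 * τ) * jacobiTheta₂_term v τ (2 * τ)) := by
  simp only [jacobiTheta₂_term, ← Complex.exp_add]
  push_cast
  ring_nf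

lemma hasSum_jacobiTheta₂_term_mul (z w : ℂ) {τ : ℂ} (hτ : 0 < im τ) :
    HasSum (fun p : ℤ × ℤ => jacobiTheta₂_term p.1 z τ * jacobiTheta₂_term p.2 w τ)
      (jacobiTheta₂ z τ * jacobiTheta₂ w τ) := by
  have hz := hasSum_jacobiTheta₂_term z hτ
  have hw := hasSum_jacobiTheta₂_term w hτ
  have hs : Summable fun p : ℤ × ℤ =>
      ‖jacobiTheta₂_term p.1 z τ * jacobiTheta₂_term p.2 w τ‖ := by
    simpa only [norm_mul] using hz.summable.norm.mul_of_nonneg hw.summable.norm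
      (fun _ => norm_nonneg _) (fun _ => norm_nonneg _)
  -- Not `exact`: the statement above elaborates the topology on `ℂ` along another (defeq)
  -- instance path than `hasSum_jacobiTheta₂_term`, and unifying the two paths times out.
  convert hz.mul hw hs.of_norm using 1

theorem jacobiTheta₂_sq (z : ℂ) {τ : ℂ} (hτ : 0 < im τ) :
    jacobiTheta₂ z τ ^ 2 = jacobiTheta₂ (2 * z) (2 * τ) * jacobiTheta₂ 0 (2 * τ)
      + cexp (π * I * (2 * z + τ))
        * (jacobiTheta₂ (2 * z + τ) (2 * τ) * jacobiTheta₂ τ (2 * τ)) := by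
  have h2τ : 0 < im (2 * τ) := by simpa using hτ
  set F : ℤ × ℤ → ℂ := fun p => jacobiTheta₂_term p.1 z τ * jacobiTheta₂_term p.2 z τ
  have heven : HasSum (fun p => F (Int.prodParityEquiv (.inl p)))
      (jacobiTheta₂ (2 * z) (2 * τ) * jacobiTheta₂ 0 (2 * τ)) :=
    (hasSum_jacobiTheta₂_term_mul (2 * z) 0 h2τ).congr_fun
      fun p => jacobiTheta₂_term_add_mul_sub p.1 p.2 z τ
  have hodd : HasSum (fun p => F (Int.prodParityEquiv (.inr p)))
      (cexp (π * I * (2 * z + τ))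
        * (jacobiTheta₂ (2 * z + τ) (2 * τ) * jacobiTheta₂ τ (2 * τ))) :=
    ((hasSum_jacobiTheta₂_term_mul (2 * z + τ) τ h2τ).mul_left _).congr_fun
      fun p => jacobiTheta₂_term_add_add_one_mul_sub p.1 p.2 z τ
  rw [sq]
  exact (hasSum_jacobiTheta₂_term_mul z z hτ).unique
    (Int.prodParityEquiv.hasSum_iff.mp (heven.sum (f := F ∘ Int.prodParityEquiv) hodd))

lemma jacobiTheta₂_add_half_sq (z : ℂ) {τ : ℂ} (hτ : 0 < im τ) :
    jacobiTheta₂ (z + 1 / 2) τ ^ 2 = jacobiTheta₂ (2 * z) (2 * τ) * jacobiTheta₂ 0 (2 * τ)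
      - cexp (π * I * (2 * z + τ))
        * (jacobiTheta₂ (2 * z + τ) (2 * τ) * jacobiTheta₂ τ (2 * τ)) := by
  rw [jacobiTheta₂_sq _ hτ, show 2 * (z + 1 / 2) = 2 * z + 1 by ring,
    show 2 * z + 1 + τ = 2 * z + τ + 1 by ring, jacobiTheta₂_add_left, jacobiTheta₂_add_left,
    mul_add, mul_one, Complex.exp_add, exp_pi_mul_I]
  ring

lemma neg_one_zpow_eq_exp (k : ℤ) : (-1 : ℂ) ^ k = cexp (k * (π * I)) := by
  rw [exp_int_mul, exp_pi_mul_I]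

lemma jtheta3_eq_jacobiTheta₂ (z τ : ℂ) : jtheta3 z τ = jacobiTheta₂ z τ := by
  rw [jtheta3, jacobiTheta₂]
  refine tsum_congr fun k => ?_
  rw [jacobiTheta₂_term, ← Complex.exp_add]
  ring_nf

lemma jtheta4_eq_jacobiTheta₂ (z τ : ℂ) : jtheta4 z τ = jacobiTheta₂ (z + 1 / 2) τ := by
  rw [jtheta4, jacobiTheta₂]
  refine tsum_congr fun k => ?_
  rw [jacobiTheta₂_term, neg_one_zpow_eq_exp, ← Complex.exp_add, ← Complex.exp_add]
  ring_nf

lemma jtheta2_eq_jacobiTheta₂ (z τ : ℂ) :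
    jtheta2 z τ = cexp (π * I * τ / 4 + π * I * z) * jacobiTheta₂ (z + τ / 2) τ := by
  rw [jtheta2, jacobiTheta₂, ← tsum_mul_left, ← tsum_mul_left]
  refine tsum_congr fun k => ?_
  simp only [jacobiTheta₂_term, ← Complex.exp_add]
  congr 1
  ring

lemma jtheta1_eq_jacobiTheta₂ (z τ : ℂ) :
    jtheta1 z τ
      = -I * cexp (π * I * τ / 4 + π * I * z) * jacobiTheta₂ (z + τ / 2 + 1 / 2) τ := by
  rw [jtheta1, jacobiTheta₂, ← tsum_mul_left, ← tsum_mul_left]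
  refine tsum_congr fun k => ?_
  simp only [jacobiTheta₂_term, neg_one_zpow_eq_exp, mul_assoc (-I), ← Complex.exp_add]
  congr 2
  ring

lemma jtheta1_eq_neg_jtheta2_add_half (z τ : ℂ) : jtheta1 z τ = -jtheta2 (z + 1 / 2) τ := by
  rw [jtheta1_eq_jacobiTheta₂, jtheta2_eq_jacobiTheta₂, add_right_comm z (τ / 2),
    show π * I * τ / 4 + π * I * (z + 1 / 2) = π * I * τ / 4 + π * I * z + π / 2 * I by ring,
    Complex.exp_add (π * I * τ / 4 + π * I * z), exp_pi_div_two_mul_I]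
  ring

lemma jtheta2_sq {τ : ℂ} (hτ : 0 < im τ) (z : ℂ) :
    jtheta2 z τ ^ 2 = cexp (π * I * τ / 2) * (cexp (2 * π * I * z)
      * jacobiTheta₂ (2 * z + τ) (2 * τ) * jacobiTheta₂ 0 (2 * τ)
      + jacobiTheta₂ (2 * z) (2 * τ) * jacobiTheta₂ τ (2 * τ)) := by
  rw [jtheta2_eq_jacobiTheta₂, mul_pow, jacobiTheta₂_sq _ hτ,
    show 2 * (z + τ / 2) = 2 * z + τ by ring, show 2 * z + τ + τ = 2 * z + 2 * τ by ring,
    jacobiTheta₂_add_left']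
  have h_even : cexp (π * I * τ / 4 + π * I * z) ^ 2
      = cexp (π * I * τ / 2) * cexp (2 * π * I * z) := by
    simp only [sq, ← Complex.exp_add]
    ring_nf
  have h_odd : cexp (π * I * τ / 4 + π * I * z) ^ 2 * cexp (π * I * (2 * z + 2 * τ))
      * cexp (-π * I * (2 * τ + 2 * (2 * z))) = cexp (π * I * τ / 2) := by
    simp only [sq, ← Complex.exp_add]
    ring_nf
  linear_combination (jacobiTheta₂ (2 * z + τ) (2 * τ) * jacobiTheta₂ 0 (2 * τ)) * h_even
    + (jacobiTheta₂ (2 * z) (2 * τ) * jacobiTheta₂ τ (2 * τ)) * h_odd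

lemma jtheta1_sq {τ : ℂ} (hτ : 0 < im τ) (z : ℂ) :
    jtheta1 z τ ^ 2 = -cexp (π * I * τ / 2) * (cexp (2 * π * I * z)
      * jacobiTheta₂ (2 * z + τ) (2 * τ) * jacobiTheta₂ 0 (2 * τ)
      - jacobiTheta₂ (2 * z) (2 * τ) * jacobiTheta₂ τ (2 * τ)) := by
  rw [jtheta1_eq_neg_jtheta2_add_half, neg_sq, jtheta2_sq hτ,
    show 2 * (z + 1 / 2) = 2 * z + 1 by ring, show 2 * z + 1 + τ = 2 * z + τ + 1 by ring,
    jacobiTheta₂_add_left, jacobiTheta₂_add_left,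
    show 2 * π * I * (z + 1 / 2) = 2 * π * I * z + π * I by ring, Complex.exp_add, exp_pi_mul_I]
  ring

theorem quadratic_theta_identity_23 (τ : ℂ) (hτ : 0 < τ.im) (z : ℂ) :
    jtheta2 0 τ ^ 2 * jtheta3 z τ ^ 2 - jtheta3 0 τ ^ 2 * jtheta2 z τ ^ 2
      = jtheta4 0 τ ^ 2 * jtheta1 z τ ^ 2 := by
  rw [jtheta2_sq hτ, jtheta2_sq hτ, jtheta1_sq hτ, jtheta3_eq_jacobiTheta₂,
    jtheta3_eq_jacobiTheta₂, jtheta4_eq_jacobiTheta₂, jacobiTheta₂_sq z hτ,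
    jacobiTheta₂_sq 0 hτ, jacobiTheta₂_add_half_sq 0 hτ,
    show π * I * (2 * z + τ) = π * I * τ + 2 * π * I * z by ring, Complex.exp_add]
  simp only [mul_zero, zero_add, Complex.exp_zero]
  ring
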